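/- arXiv:1603.00197 — 3 statements merged into one kernel-verified Lean document; each statement's English description precedes it below -/
import Mathlib

section
/- If H is a pseudo-copy of a tree T contained in a simple bipartite graph G such that the homomorphism h respects the bipartition (vertices of one class of T map into one class of G), then for any ordering t_0,...,t_3 of vertices of T with each initial segment inducing a connected subtree, the images h(t_0), h(t_1), h(t_2), h(t_3) are pairwise distinct (H is 3-good). -/
/-- A pseudo-copy of a tree `T` in a simple bipartite graph `G` whose
homomorphism respects the bipartitions is 3-good: for any ordering `t0, t1, t2, t3` of
vertices of `T` with connected initial segments, the images are pairwise distinct. -/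
theorem stmt1 {VT VG : Type*} (T : SimpleGraph VT) (G : SimpleGraph VG) (hT : T.IsTree)
    (A : Set VG) (TA : Set VT)
    (hGbip : ∀ a b : VG, G.Adj a b → (a ∈ A ↔ b ∉ A))
    (hTbip : ∀ a b : VT, T.Adj a b → (a ∈ TA ↔ b ∉ TA))
    (h : T →g G)
    (hbij : Function.Bijective h.mapEdgeSet)
    (hside : ∀ s ∈ TA, h s ∈ A)
    (hside' : ∀ s : VT, s ∉ TA → h s ∉ A)
    (t0 t1 t2 t3 : VT)
    (hdist : t0 ≠ t1 ∧ t0 ≠ t2 ∧ t0 ≠ t3 ∧ t1 ≠ t2 ∧ t1 ≠ t3 ∧ t2 ≠ t3)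
    (h01 : T.Adj t0 t1)
    (h2c : T.Adj t0 t2 ∨ T.Adj t1 t2)
    (h3c : T.Adj t0 t3 ∨ T.Adj t1 t3 ∨ T.Adj t2 t3) :
    h t0 ≠ h t1 ∧ h t0 ≠ h t2 ∧ h t0 ≠ h t3 ∧
    h t1 ≠ h t2 ∧ h t1 ≠ h t3 ∧ h t2 ≠ h t3 := by
  obtain ⟨d01, d02, d03, d12, d13, d23⟩ := hdist
  -- adjacent vertices have distinct (adjacent) images
  have adjne : ∀ u v : VT, T.Adj u v → h u ≠ h v := fun u v huv => (h.map_adj huv).ne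
  -- vertices on opposite sides of the bipartition have distinct images
  have bip : ∀ u v : VT, (u ∈ TA ↔ v ∉ TA) → h u ≠ h v := by
    intro u v hs heq
    by_cases hu : u ∈ TA
    · exact hside' v (hs.mp hu) (heq ▸ hside u hu)
    · exact hside' u hu (heq ▸ hside v (by tauto))
  -- two distinct neighbors of a common vertex have distinct images
  have key : ∀ w u v : VT, u ≠ v → T.Adj w u → T.Adj w v → h u ≠ h v := by
    intro w u v huv hwu hwv heq
    have e1 : s(w, u) ∈ T.edgeSet := hwu
    have e2 : s(w, v) ∈ T.edgeSet := hwv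
    have heq2 : h.mapEdgeSet ⟨s(w, u), e1⟩ = h.mapEdgeSet ⟨s(w, v), e2⟩ := by
      apply Subtype.ext
      simp [SimpleGraph.Hom.mapEdgeSet, Sym2.map_pair_eq, heq]
    have := hbij.1 heq2
    have hs : s(w, u) = s(w, v) := congrArg Subtype.val this
    exact huv (Sym2.congr_right.mp hs)
  refine ⟨adjne _ _ h01, ?_, ?_, ?_, ?_, ?_⟩
  · rcases h2c with h2 | h2
    · exact adjne _ _ h2
    · exact key t1 t0 t2 d02 h01.symm h2
  · rcases h3c with h3 | h3 | h3
    · exact adjne _ _ h3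
    · exact key t1 t0 t3 d03 h01.symm h3
    · rcases h2c with h2 | h2
      · exact key t2 t0 t3 d03 h2.symm h3
      · exact bip t0 t3 (by
        have a := hTbip _ _ h01
        have b := hTbip _ _ h2
        have c := hTbip _ _ h3
        tauto)
  · rcases h2c with h2 | h2
    · exact key t0 t1 t2 d12 h01 h2
    · exact adjne _ _ h2
  · rcases h3c with h3 | h3 | h3
    · exact key t0 t1 t3 d13 h01 h3
    · exact adjne _ _ h3
    · rcases h2c with h2 | h2
      · exact bip t1 t3 (by
        have a := hTbip _ _ h01
        have b := hTbip _ _ h2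
        have c := hTbip _ _ h3
        tauto)
      · exact key t2 t1 t3 d13 h2.symm h3
  · rcases h3c with h3 | h3 | h3
    · rcases h2c with h2 | h2
      · exact key t0 t2 t3 d23 h2 h3
      · exact bip t2 t3 (by
        have a := hTbip _ _ h01
        have b := hTbip _ _ h2
        have c := hTbip _ _ h3
        tauto)
    · rcases h2c with h2 | h2
      · exact bip t2 t3 (by
        have a := hTbip _ _ h01
        have b := hTbip _ _ h2
        have c := hTbip _ _ h3
        tauto)
      · exact key t1 t2 t3 d23 h2 h3
    · exact adjne _ _ h3
end

section
/- Let H_1 and H_2 be pseudo-copies of a tree T in a graph G, both mapping t_{i'} to the same vertex v, where t_{i'} is the endpoint of edge e_i of T distinct from t_i. Then the i-switch sw_i({H_1,H_2}) = {H_1^{i+} ∪ H_2^{i-}, H_1^{i-} ∪ H_2^{i+}} consists of two pseudo-copies of T, and the multiset union of edge sets of the two resulting pseudo-copies equals the multiset union of edge sets of H_1 and H_2. -/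
/-- the `i`-switch. Given two edge-disjoint pseudo-copies `H₁, H₂` of a tree
`T` in `G` (homomorphisms `h₁, h₂` injective on edges) both mapping `t_{i'}` to `v`, where
`e_i = t_{i'}t_i` is an edge of `T` and `S` is the vertex set of the component of `T - e_i`
containing `t₀` (every other edge of `T` stays within `S` or its complement), the maps
`g₁` (equal to `h₂` on `S` and `h₁` elsewhere, i.e. `H₂^{i-} ∪ H₁^{i+}`) and `g₂`
(the other combination) are again pseudo-copies of `T`, and edge-by-edge the multiset of
images under `g₁, g₂` equals that under `h₁, h₂`. -/
theorem stmt11 {VT VG : Type*} (T : SimpleGraph VT) (G : SimpleGraph VG) (hT : T.IsTree)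
    (h1 h2 : T →g G)
    (hinj1 : Set.InjOn (Sym2.map h1) T.edgeSet)
    (hinj2 : Set.InjOn (Sym2.map h2) T.edgeSet)
    (hdisj : Disjoint (Sym2.map h1 '' T.edgeSet) (Sym2.map h2 '' T.edgeSet))
    (ti ti' : VT) (hei : T.Adj ti' ti)
    (v : VG) (hv1 : h1 ti' = v) (hv2 : h2 ti' = v)
    (S : Set VT) [DecidablePred (· ∈ S)] (hS' : ti' ∈ S) (hSi : ti ∉ S)
    (hsplit : ∀ a b : VT, T.Adj a b → s(a, b) ≠ s(ti', ti) → (a ∈ S ↔ b ∈ S)) :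
    ∀ g1 g2 : VT → VG,
      g1 = (fun x => if x ∈ S then h2 x else h1 x) →
      g2 = (fun x => if x ∈ S then h1 x else h2 x) →
      (∀ a b : VT, T.Adj a b → G.Adj (g1 a) (g1 b)) ∧
      (∀ a b : VT, T.Adj a b → G.Adj (g2 a) (g2 b)) ∧
      Set.InjOn (Sym2.map g1) T.edgeSet ∧
      Set.InjOn (Sym2.map g2) T.edgeSet ∧
      (∀ e ∈ T.edgeSet,
        (Sym2.map g1 e = Sym2.map h1 e ∧ Sym2.map g2 e = Sym2.map h2 e) ∨
        (Sym2.map g1 e = Sym2.map h2 e ∧ Sym2.map g2 e = Sym2.map h1 e)) := by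
  rintro g1 g2 rfl rfl
  have h12 : h2 ti' = h1 ti' := hv2.trans hv1.symm
  have key : ∀ a b : VT, T.Adj a b →
      ((if a ∈ S then h2 a else h1 a) = h1 a ∧ (if b ∈ S then h2 b else h1 b) = h1 b ∧
       (if a ∈ S then h1 a else h2 a) = h2 a ∧ (if b ∈ S then h1 b else h2 b) = h2 b) ∨
      ((if a ∈ S then h2 a else h1 a) = h2 a ∧ (if b ∈ S then h2 b else h1 b) = h2 b ∧
       (if a ∈ S then h1 a else h2 a) = h1 a ∧ (if b ∈ S then h1 b else h2 b) = h1 b) := by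
    intro a b hab
    by_cases hsp : s(a, b) = s(ti', ti)
    · rw [Sym2.eq_iff] at hsp
      rcases hsp with ⟨rfl, rfl⟩ | ⟨rfl, rfl⟩
      · exact Or.inl ⟨(if_pos hS').trans h12, if_neg hSi,
          (if_pos hS').trans h12.symm, if_neg hSi⟩
      · exact Or.inl ⟨if_neg hSi, (if_pos hS').trans h12,
          if_neg hSi, (if_pos hS').trans h12.symm⟩
    · have hiff := hsplit a b hab hsp
      by_cases ha : a ∈ S
      · have hb : b ∈ S := hiff.mp ha
        exact Or.inr ⟨if_pos ha, if_pos hb, if_pos ha, if_pos hb⟩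
      · have hb : b ∉ S := fun hb => ha (hiff.mpr hb)
        exact Or.inl ⟨if_neg ha, if_neg hb, if_neg ha, if_neg hb⟩
  have mapkey : ∀ e ∈ T.edgeSet,
      (Sym2.map (fun x => if x ∈ S then h2 x else h1 x) e = Sym2.map h1 e ∧
       Sym2.map (fun x => if x ∈ S then h1 x else h2 x) e = Sym2.map h2 e) ∨
      (Sym2.map (fun x => if x ∈ S then h2 x else h1 x) e = Sym2.map h2 e ∧
       Sym2.map (fun x => if x ∈ S then h1 x else h2 x) e = Sym2.map h1 e) := by
    intro e he
    induction e with
    | _ a b =>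
      rw [SimpleGraph.mem_edgeSet] at he
      rcases key a b he with ⟨k1, k2, k3, k4⟩ | ⟨k1, k2, k3, k4⟩
      · left
        refine ⟨?_, ?_⟩ <;> rw [Sym2.map_pair_eq, Sym2.map_pair_eq]
        · rw [k1, k2]
        · rw [k3, k4]
      · right
        refine ⟨?_, ?_⟩ <;> rw [Sym2.map_pair_eq, Sym2.map_pair_eq]
        · rw [k1, k2]
        · rw [k3, k4]
  refine ⟨?_, ?_, ?_, ?_, mapkey⟩
  · intro a b hab
    rcases key a b hab with ⟨k1, k2, _, _⟩ | ⟨k1, k2, _, _⟩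
    · have := h1.map_adj hab; rw [← k1, ← k2] at this; exact this
    · have := h2.map_adj hab; rw [← k1, ← k2] at this; exact this
  · intro a b hab
    rcases key a b hab with ⟨_, _, k3, k4⟩ | ⟨_, _, k3, k4⟩
    · have := h2.map_adj hab; rw [← k3, ← k4] at this; exact this
    · have := h1.map_adj hab; rw [← k3, ← k4] at this; exact this
  · intro e1 he1 e2 he2 heq
    rcases mapkey e1 he1 with ⟨k1, _⟩ | ⟨k1, _⟩ <;>
      rcases mapkey e2 he2 with ⟨k2, _⟩ | ⟨k2, _⟩
    · exact hinj1 he1 he2 (by rw [← k1, ← k2, heq])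
    · exact (Set.disjoint_left.mp hdisj ⟨e1, he1, rfl⟩
        ⟨e2, he2, (k1.symm.trans (heq.trans k2)).symm⟩).elim
    · exact (Set.disjoint_left.mp hdisj ⟨e2, he2, rfl⟩
        ⟨e1, he1, k1.symm.trans (heq.trans k2)⟩).elim
    · exact hinj2 he1 he2 (by rw [← k1, ← k2, heq])
  · intro e1 he1 e2 he2 heq
    rcases mapkey e1 he1 with ⟨_, k1⟩ | ⟨_, k1⟩ <;>
      rcases mapkey e2 he2 with ⟨_, k2⟩ | ⟨_, k2⟩
    · exact hinj2 he1 he2 (by rw [← k1, ← k2, heq])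
    · exact (Set.disjoint_left.mp hdisj ⟨e2, he2, rfl⟩
        ⟨e1, he1, k1.symm.trans (heq.trans k2)⟩).elim
    · exact (Set.disjoint_left.mp hdisj ⟨e1, he1, rfl⟩
        ⟨e2, he2, (k1.symm.trans (heq.trans k2)).symm⟩).elim
    · exact hinj1 he1 he2 (by rw [← k1, ← k2, heq])
end

section
/- With the same setup as the i-switch: if H_1 and H_2 are both (i−1)-good pseudo-copies of T mapping t_{i'} to v, and if H_1 ∩ H_2 = {v} (their vertex sets meet only in v), then both pseudo-copies in sw_i({H_1, H_2}) are i-good. -/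
/-- if `H₁` and `H₂` are `(i-1)`-good pseudo-copies of `T` (homomorphisms
`h₁, h₂`) both mapping `t_{i'}` to `v` (where `e_i = t_{i'} t_i`, `i' < i`), whose vertex
sets meet only in `v`, and `S` is the side of `T - e_i` containing `t₀, …, t_{i-1}`, then
both pseudo-copies produced by the `i`-switch are `i`-good. -/
theorem stmt12 {VT VG : Type*} (T : SimpleGraph VT) (G : SimpleGraph VG) (hT : T.IsTree)
    (m : ℕ) (t : Fin (m + 1) → VT) (htinj : Function.Injective t)
    (h1 h2 : T →g G)
    (i i' : Fin (m + 1)) (hi' : i' < i)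
    (hadj : T.Adj (t i') (t i))
    (v : VG) (hv1 : h1 (t i') = v) (hv2 : h2 (t i') = v)
    (hmeet : ∀ a b : VT, h1 a = h2 b → h1 a = v)
    (good1 : ∀ j k : Fin (m + 1), j < i → k < i → h1 (t j) = h1 (t k) → j = k)
    (good2 : ∀ j k : Fin (m + 1), j < i → k < i → h2 (t j) = h2 (t k) → j = k)
    (S : Set VT) [DecidablePred (· ∈ S)]
    (hS : ∀ j : Fin (m + 1), j < i → t j ∈ S) (hSi : t i ∉ S) :
    ∀ g1 g2 : VT → VG,
      g1 = (fun x => if x ∈ S then h1 x else h2 x) →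
      g2 = (fun x => if x ∈ S then h2 x else h1 x) →
      (∀ j k : Fin (m + 1), j ≤ i → k ≤ i → g1 (t j) = g1 (t k) → j = k) ∧
      (∀ j k : Fin (m + 1), j ≤ i → k ≤ i → g2 (t j) = g2 (t k) → j = k) := by
  intro g1 g2 hg1 hg2
  subst hg1 hg2
  have hne1 : h1 (t i) ≠ h1 (t i') := (h1.map_adj hadj).ne'
  have hne2 : h2 (t i) ≠ h2 (t i') := (h2.map_adj hadj).ne'
  constructor
  · intro j k hj hk heq
    rcases lt_or_eq_of_le hj with hj | hj <;> rcases lt_or_eq_of_le hk with hk | hk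
    · exact good1 j k hj hk (by simpa [hS j hj, hS k hk] using heq)
    · exfalso; rw [hk] at heq
      simp only [hS j hj, if_pos, hSi, if_neg, not_false_iff] at heq
      have h3 : h1 (t j) = v := hmeet (t j) (t i) heq
      exact absurd ((heq ▸ h3).trans hv2.symm) hne2
    · exfalso; rw [hj] at heq
      simp only [hS k hk, if_pos, hSi, if_neg, not_false_iff] at heq
      have h3 : h1 (t k) = v := hmeet (t k) (t i) heq.symm
      exact absurd ((heq.symm ▸ h3).trans hv2.symm) hne2
    · rw [hj, hk]
  · intro j k hj hk heq
    rcases lt_or_eq_of_le hj with hj | hj <;> rcases lt_or_eq_of_le hk with hk | hk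
    · exact good2 j k hj hk (by simpa [hS j hj, hS k hk] using heq)
    · exfalso; rw [hk] at heq
      simp only [hS j hj, if_pos, hSi, if_neg, not_false_iff] at heq
      have h3 : h1 (t i) = v := hmeet (t i) (t j) heq.symm
      exact absurd (h3.trans hv1.symm) hne1
    · exfalso; rw [hj] at heq
      simp only [hS k hk, if_pos, hSi, if_neg, not_false_iff] at heq
      have h3 : h1 (t i) = v := hmeet (t i) (t k) heq
      exact absurd (h3.trans hv1.symm) hne1
    · rw [hj, hk]
end
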